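/- arXiv:2604.19644 — 2 statements merged into one kernel-verified Lean document; each statement's English description precedes it below -/
import Mathlib

section
/- Let d ≥ 1 be an integer and let F_1, ..., F_{d+1} be nonempty finite families of convex sets in ℝ^d. Suppose that for every choice of sets C_1 ∈ F_1, ..., C_{d+1} ∈ F_{d+1} the intersection C_1 ∩ ... ∩ C_{d+1} is nonempty. Then there exists an index j ∈ {1, ..., d+1} such that the intersection of all members of F_j is nonempty. -/
/-! Auxiliary facts about the sum-of-squares function on `Fin d → ℝ`. -/

/-- Sum of squares of coordinates. -/
noncomputable def sumSq (d : ℕ) (y : Fin d → ℝ) : ℝ := ∑ i, y i ^ 2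

lemma sumSq_continuous (d : ℕ) : Continuous (sumSq d) := by
  unfold sumSq
  fun_prop

lemma sumSq_comb_le (d : ℕ) (u v : Fin d → ℝ) {a b : ℝ}
    (ha : 0 ≤ a) (hb : 0 ≤ b) (hab : a + b = 1) :
    sumSq d (a • u + b • v) ≤ a * sumSq d u + b * sumSq d v := by
  unfold sumSq
  rw [Finset.mul_sum, Finset.mul_sum, ← Finset.sum_add_distrib]
  refine Finset.sum_le_sum fun i _ => ?_
  have : (a • u + b • v) i = a * u i + b * v i := by
    simp [Pi.add_apply, Pi.smul_apply, smul_eq_mul]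
  rw [this]
  nlinarith [sq_nonneg (u i - v i), mul_nonneg ha hb]

/-- The sublevel sets of `sumSq` are convex. -/
lemma sumSq_sublevel_convex (d : ℕ) (c : ℝ) :
    Convex ℝ {y : Fin d → ℝ | sumSq d y < c} := by
  intro y hy z hz a b ha hb hab
  simp only [Set.mem_setOf_eq] at *
  have h := sumSq_comb_le d y z ha hb hab
  rcases eq_or_lt_of_le ha with h0 | h0
  · have : b = 1 := by linarith
    simp only [← h0, this, zero_smul, one_smul, zero_add] at *
    linarith
  · have h1 : a * sumSq d y < a * c := by exact (mul_lt_mul_iff_right₀ h0).mpr hy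
    have h2 : b * sumSq d z ≤ b * c := mul_le_mul_of_nonneg_left hz.le hb
    have hc : a * c + b * c = c := by rw [← add_mul, hab, one_mul]
    linarith

/-- Strict convexity at midpoints of distinct points. -/
lemma sumSq_midpoint_lt (d : ℕ) {u v : Fin d → ℝ} (huv : u ≠ v) :
    sumSq d ((1/2 : ℝ) • u + (1/2 : ℝ) • v) < (sumSq d u + sumSq d v) / 2 := by
  obtain ⟨i0, hi0⟩ : ∃ i, u i ≠ v i := by
    by_contra h
    push_neg at h
    exact huv (funext h)
  unfold sumSq
  have hrw : ∀ i : Fin d, ((1/2 : ℝ) • u + (1/2 : ℝ) • v) i = (u i + v i) / 2 := by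
    intro i; simp [Pi.add_apply, Pi.smul_apply, smul_eq_mul]; ring
  calc ∑ i, ((1/2 : ℝ) • u + (1/2 : ℝ) • v) i ^ 2
      = ∑ i, ((u i + v i) / 2) ^ 2 := by
        exact Finset.sum_congr rfl fun i _ => by rw [hrw i]
    _ < ∑ i, (u i ^ 2 + v i ^ 2) / 2 := by
        refine Finset.sum_lt_sum (fun i _ => by nlinarith [sq_nonneg (u i - v i)])
          ⟨i0, Finset.mem_univ i0, by
            have hpos : 0 < (u i0 - v i0) ^ 2 := by
              have h0 := sub_ne_zero_of_ne hi0
              positivity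
            nlinarith⟩
    _ = (∑ i, u i ^ 2 + ∑ i, v i ^ 2) / 2 := by
        rw [← Finset.sum_div, Finset.sum_add_distrib]

/-- The minimizer of `sumSq` on a convex set is unique. -/
lemma sumSq_argmin_unique (d : ℕ) {K : Set (Fin d → ℝ)} (hK : Convex ℝ K)
    {x y : Fin d → ℝ} (hx : x ∈ K) (hy : y ∈ K)
    (hmx : ∀ z ∈ K, sumSq d x ≤ sumSq d z) (hmy : ∀ z ∈ K, sumSq d y ≤ sumSq d z) :
    x = y := by
  by_contra hne
  have hmem : (1/2 : ℝ) • x + (1/2 : ℝ) • y ∈ K :=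
    hK hx hy (by norm_num) (by norm_num) (by norm_num)
  have h1 := sumSq_midpoint_lt d hne
  have h2 := hmx _ hmem
  have h3 : sumSq d x = sumSq d y := le_antisymm (hmx y hy) (hmy x hx)
  rw [h3] at h2
  linarith

/-- **Colorful Helly theorem** (Bárány–Lovász). If `F 1, …, F (d+1)` are nonempty finite
families of convex sets in `ℝ^d` such that every colorful choice `C j ∈ F j` has a common
point, then some family `F j` has a common point. -/
theorem colorful_helly (d : ℕ) (hd : 1 ≤ d)
    (F : Fin (d + 1) → Finset (Set (Fin d → ℝ)))
    (hne : ∀ j, (F j).Nonempty)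
    (hconv : ∀ j, ∀ C ∈ F j, Convex ℝ C)
    (hcol : ∀ C : Fin (d + 1) → Set (Fin d → ℝ),
      (∀ j, C j ∈ F j) → (⋂ j, C j).Nonempty) :
    ∃ j : Fin (d + 1), (⋂ C ∈ F j, C).Nonempty := by
  classical
  let E := Fin d → ℝ
  let φ : E → ℝ := sumSq d
  -- The type of colorful selections.
  let T := ∀ j : Fin (d + 1), {s : Set E // s ∈ F j}
  haveI : Nonempty T := ⟨fun j => ⟨(hne j).choose, (hne j).choose_spec⟩⟩
  haveI : Finite T := by
    haveI : ∀ j : Fin (d + 1), Finite {s : Set E // s ∈ F j} := fun j =>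
      (F j).finite_toSet.to_subtype
    exact Pi.finite
  -- A witness point in every colorful intersection.
  let p : T → E := fun σ => (hcol (fun j => (σ j).1) (fun j => (σ j).2)).choose
  have hp : ∀ σ : T, ∀ j, p σ ∈ (σ j).1 := by
    intro σ j
    have := (hcol (fun j => (σ j).1) (fun j => (σ j).2)).choose_spec
    exact Set.mem_iInter.mp this j
  -- Compact convex subsets: hulls of the relevant witnesses.
  let G : Fin (d + 1) → Set E → Set E := fun j A =>
    convexHull ℝ (p '' {σ : T | (σ j).1 = A})
  have hGconv : ∀ j A, Convex ℝ (G j A) := fun j A => convex_convexHull ℝ _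
  have hGcompact : ∀ j A, IsCompact (G j A) := fun j A =>
    ((Set.toFinite _).image p).isCompact_convexHull ℝ
  have hGclosed : ∀ j A, IsClosed (G j A) := fun j A => (hGcompact j A).isClosed
  have hGsub : ∀ j, ∀ A ∈ F j, G j A ⊆ A := by
    intro j A hA
    apply convexHull_min _ (hconv j A hA)
    rintro _ ⟨σ, hσ, rfl⟩
    have := hp σ j
    rwa [hσ] at this
  have hpG : ∀ (σ : T) (j), p σ ∈ G j (σ j).1 := fun σ j =>
    subset_convexHull ℝ _ ⟨σ, rfl, rfl⟩
  -- The intersection of a colorful selection of hulls.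
  let K : T → Set E := fun σ => ⋂ j, G j (σ j).1
  have hKne : ∀ σ, (K σ).Nonempty := fun σ => ⟨p σ, Set.mem_iInter.mpr (hpG σ)⟩
  have hKconv : ∀ σ, Convex ℝ (K σ) := fun σ => convex_iInter fun j => hGconv _ _
  have hKcompact : ∀ σ, IsCompact (K σ) := by
    intro σ
    refine (hGcompact 0 ((σ 0).1)).of_isClosed_subset
      (isClosed_iInter fun j => hGclosed _ _) ?_
    exact Set.iInter_subset _ 0
  -- The minimizer of sumSq on each K σ.
  have hv : ∀ σ : T, ∃ x ∈ K σ, IsMinOn φ (K σ) x := fun σ =>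
    (hKcompact σ).exists_isMinOn (hKne σ) (sumSq_continuous d).continuousOn
  let v : T → E := fun σ => (hv σ).choose
  have hvmem : ∀ σ, v σ ∈ K σ := fun σ => (hv σ).choose_spec.1
  have hvmin : ∀ σ, ∀ z ∈ K σ, φ (v σ) ≤ φ z := fun σ =>
    fun z hz => (hv σ).choose_spec.2 hz
  -- Choose the selection maximizing the min value.
  obtain ⟨σs, hσs⟩ := Finite.exists_max (fun σ : T => φ (v σ))
  set x := v σs with hxdef
  -- The "drop one color" sets.
  let Kex : Fin (d + 1) → Set E := fun j0 => ⋂ j, ⋂ (_ : j ≠ j0), G j ((σs j).1)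
  have hKexconv : ∀ j0, Convex ℝ (Kex j0) :=
    fun j0 => convex_iInter fun j => convex_iInter fun _ => hGconv _ _
  have hKsub : ∀ j0, K σs ⊆ Kex j0 := by
    intro j0 y hy
    exact Set.mem_iInter.mpr fun j => Set.mem_iInter.mpr fun _ =>
      Set.mem_iInter.mp hy j
  -- Key step via Helly: x is a minimizer on Kex j0 for some j0.
  have key : ∃ j0, ∀ z ∈ Kex j0, φ x ≤ φ z := by
    by_contra hcon
    push_neg at hcon
    choose y hy hylt using hcon
    -- Apply Helly to the d+2 sets: the G's and the strict sublevel set of φ at x.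
    set B : Set E := {z : E | φ z < φ x} with hB
    let H : Option (Fin (d + 1)) → Set E := fun o =>
      Option.rec B (fun j => G j ((σs j).1)) o
    have hHconv : ∀ o ∈ (Finset.univ : Finset (Option (Fin (d + 1)))), Convex ℝ (H o) := by
      rintro (_ | j) _
      · exact sumSq_sublevel_convex d _
      · exact hGconv _ _
    have hfin : Module.finrank ℝ E = d := Module.finrank_fin_fun ℝ
    have hinter : ∀ I ⊆ (Finset.univ : Finset (Option (Fin (d + 1)))),
        I.card ≤ Module.finrank ℝ E + 1 → (⋂ i ∈ I, H i).Nonempty := by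
      intro I _ hIcard
      rw [hfin] at hIcard
      by_cases hnone : none ∈ I
      · -- Some color j0 is missing from I.
        have : ∃ j0 : Fin (d + 1), some j0 ∉ I := by
          by_contra hall
          push_neg at hall
          have hsub : insert none (Finset.univ.image (some : Fin (d + 1) → Option (Fin (d + 1)))) ⊆ I := by
            intro o ho
            rcases Finset.mem_insert.mp ho with rfl | ho
            · exact hnone
            · obtain ⟨j, _, rfl⟩ := Finset.mem_image.mp ho
              exact hall j
          have hcard : d + 2 ≤ I.card := by
            have h1 : (insert none (Finset.univ.image (some : Fin (d + 1) → Option (Fin (d + 1))))).card = d + 2 := by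
              rw [Finset.card_insert_of_notMem (by simp)]
              rw [Finset.card_image_of_injective _ (Option.some_injective _)]
              simp
            calc d + 2 = _ := h1.symm
              _ ≤ I.card := Finset.card_le_card hsub
          omega
        obtain ⟨j0, hj0⟩ := this
        refine ⟨y j0, Set.mem_iInter₂.mpr ?_⟩
        rintro (_ | j) hi
        · exact hylt j0
        · have hjne : j ≠ j0 := by rintro rfl; exact hj0 hi
          exact Set.mem_iInter.mp (Set.mem_iInter.mp (hy j0) j) hjne
      · -- x itself works.
        refine ⟨x, Set.mem_iInter₂.mpr ?_⟩
        rintro (_ | j) hi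
        · exact absurd hi hnone
        · exact Set.mem_iInter.mp (hvmem σs) j
    obtain ⟨z, hz⟩ := Convex.helly_theorem' hHconv hinter
    rw [Set.mem_iInter₂] at hz
    have hzK : z ∈ K σs := Set.mem_iInter.mpr fun j => hz (some j) (Finset.mem_univ _)
    have hzB : φ z < φ x := hz none (Finset.mem_univ _)
    exact absurd (hvmin σs z hzK) (not_le.mpr hzB)
  obtain ⟨j0, hj0min⟩ := key
  -- x lies in every set of the family F j0.
  refine ⟨j0, x, Set.mem_iInter₂.mpr ?_⟩
  intro A hA
  -- Swap in A at color j0.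
  let σ' : T := Function.update σs j0 ⟨A, hA⟩
  have hσ'ne : ∀ j, j ≠ j0 → σ' j = σs j := fun j hj => Function.update_of_ne hj _ _
  have hsub' : K σ' ⊆ Kex j0 := by
    intro z hz
    refine Set.mem_iInter.mpr fun j => Set.mem_iInter.mpr fun hj => ?_
    have := Set.mem_iInter.mp hz j
    rwa [hσ'ne j hj] at this
  have h1 : φ x ≤ φ (v σ') := hj0min _ (hsub' (hvmem σ'))
  have h2 : φ (v σ') ≤ φ x := hσs σ'
  have heq : v σ' = x := by
    refine sumSq_argmin_unique d (hKexconv j0) (hsub' (hvmem σ')) (hKsub j0 (hvmem σs))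
      ?_ hj0min
    intro z hz
    calc φ (v σ') ≤ φ x := h2
      _ ≤ φ z := hj0min z hz
  have hxK : x ∈ K σ' := heq ▸ hvmem σ'
  have : x ∈ G j0 ((σ' j0).1) := Set.mem_iInter.mp hxK j0
  have hj0A : (σ' j0).1 = A := by simp [σ', Function.update_self]
  rw [hj0A] at this
  exact hGsub j0 A hA this
end

section
/- Let d, s, m ≥ 1 be integers. Let v_1, ..., v_s ∈ ℝ^{d+1} and q_1, ..., q_m ∈ ℝ^{d+1} be vectors, let z_1, ..., z_m ∈ ℝ^s (write z_{ℓ,j} for the j-th coordinate of z_ℓ), and let a_1, ..., a_m be nonnegative real numbers. Suppose that: (i) for every ℓ ∈ {1, ..., m}, Σ_{j=1}^s z_{ℓ,j} ⟨v_j, q_ℓ⟩ > 0; and (ii) for every j ∈ {1, ..., s}, Σ_{ℓ=1}^m a_ℓ z_{ℓ,j} = 0 and Σ_{ℓ=1}^m a_ℓ z_{ℓ,j} q_ℓ = 0 in ℝ^{d+1}. Then a_ℓ = 0 for all ℓ ∈ {1, ..., m}. -/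
open scoped RealInnerProductSpace

theorem sum_mul_sum_inner_eq_sum_inner_sum_smul {E ι κ : Type*} [NormedAddCommGroup E]
    [InnerProductSpace ℝ E] [Fintype ι] [Fintype κ] (v : κ → E) (q : ι → E) (z : ι → κ → ℝ)
    (a : ι → ℝ) :
    ∑ ℓ, a ℓ * ∑ j, z ℓ j * ⟪v j, q ℓ⟫ = ∑ j, ⟪v j, ∑ ℓ, (a ℓ * z ℓ j) • q ℓ⟫ := by
  simp_rw [inner_sum, real_inner_smul_right, Finset.mul_sum, mul_assoc]
  exact Finset.sum_comm

theorem eq_zero_of_sum_mul_eq_zero_of_pos {ι : Type*} [Fintype ι] {a f : ι → ℝ}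
    (ha : ∀ i, 0 ≤ a i) (hf : ∀ i, 0 < f i) (hsum : ∑ i, a i * f i = 0) (i : ι) : a i = 0 := by
  have hterm : a i * f i = 0 :=
    (Finset.sum_eq_zero_iff_of_nonneg fun k _ ↦ mul_nonneg (ha k) (hf k).le).mp hsum i
      (Finset.mem_univ i)
  exact (mul_eq_zero.mp hterm).resolve_right (hf i).ne'

theorem c2_implies_c1_general (d s m : ℕ)
    (v : Fin s → EuclideanSpace ℝ (Fin (d + 1)))
    (q : Fin m → EuclideanSpace ℝ (Fin (d + 1)))
    (z : Fin m → Fin s → ℝ) (a : Fin m → ℝ) (ha : ∀ ℓ, 0 ≤ a ℓ)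
    (h1 : ∀ ℓ, 0 < ∑ j, z ℓ j * ⟪v j, q ℓ⟫)
    (h3 : ∀ j, ∑ ℓ, (a ℓ * z ℓ j) • q ℓ = 0) :
    ∀ ℓ, a ℓ = 0 := by
  refine eq_zero_of_sum_mul_eq_zero_of_pos ha h1 ?_
  rw [sum_mul_sum_inner_eq_sum_inner_sum_smul]
  simp [h3]

/-- The key implication (condition (c₂) implies condition (c₁)) from the proof of
Lemma 4.1 of the paper, real case: if each point `q ℓ` has positive pairing
`∑ j, z ℓ j * ⟪v j, q ℓ⟫` and the nonnegative coefficients `a ℓ` produce, for every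
`j`, an affine dependency `∑ ℓ, a ℓ * z ℓ j = 0`, `∑ ℓ, (a ℓ * z ℓ j) • q ℓ = 0`,
then all the `a ℓ` vanish. -/
theorem c2_implies_c1 (d s m : ℕ) (hd : 1 ≤ d) (hs : 1 ≤ s) (hm : 1 ≤ m)
    (v : Fin s → EuclideanSpace ℝ (Fin (d + 1)))
    (q : Fin m → EuclideanSpace ℝ (Fin (d + 1)))
    (z : Fin m → Fin s → ℝ) (a : Fin m → ℝ) (ha : ∀ ℓ, 0 ≤ a ℓ)
    (h1 : ∀ ℓ, 0 < ∑ j, z ℓ j * ⟪v j, q ℓ⟫)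
    (h2 : ∀ j, ∑ ℓ, a ℓ * z ℓ j = 0)
    (h3 : ∀ j, ∑ ℓ, (a ℓ * z ℓ j) • q ℓ = 0) :
    ∀ ℓ, a ℓ = 0 :=
  c2_implies_c1_general d s m v q z a ha h1 h3
end
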